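/- Let P be a projective POVM with M projectors and fix integers q ≥ 2, t ≥ 0. The minimum number n such that there exist commuting q-observables Q_1,...,Q_n consistent with P even after any t errors on their classical outcomes equals n_q(M, 2t+1), where n_q(M,d) is the shortest length of a q-ary code with at least M codewords and minimum distance at least d. -/

import Mathlib

/-- A `q`-ary code with minimum distance at least `d`. -/
def IsCode (q n d : ℕ) (C : Finset (Fin n → Fin q)) : Prop :=
  ∀ x ∈ C, ∀ y ∈ C, x ≠ y → d ≤ hammingDist x y

/-- Shortest length of a `q`-ary code with at least `M` codewords and minimum
distance at least `d`. -/
noncomputable def nq (q M d : ℕ) : ℕ :=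
  sInf {n : ℕ | ∃ C : Finset (Fin n → Fin q), IsCode q n d C ∧ M ≤ C.card}

/-- `n` commuting `q`-observables, given by outcome-coefficient vectors
`x : Fin M → Fin n → Fin q`, are consistent with an `M`-outcome projective POVM
even after `t` errors on the classical outcomes: some decoding function `f`
recovers the correct label from any outcome word within Hamming distance `t`
of the true codeword. -/
def ConsistentAfterErrors (q M n t : ℕ) : Prop :=
  ∃ x : Fin M → Fin n → Fin q, ∃ f : (Fin n → Fin q) → Fin M,
    ∀ k (y : Fin n → Fin q), hammingDist y (x k) ≤ t → f y = k

/-! Decoding within radius `t` is possible exactly when the codewords are pairwise at Hamming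
distance `> 2t`: a word within distance `t` of two codewords would have to be decoded to both,
and two words at distance `≤ 2t` always have a common word within distance `t` of each (change
`min t d` of the differing coordinates). Hence the consistent families of `n` observables are
exactly the `q`-ary codes of length `n` and minimum distance `2t + 1`. -/

section Hamming

variable {ι : Type*} [Fintype ι] {β : ι → Type*} [∀ i, DecidableEq (β i)]

theorem exists_hammingDist_le_of_hammingDist_le_add {s t : ℕ} (a b : ∀ i, β i)
    (h : hammingDist a b ≤ s + t) : ∃ y, hammingDist y a ≤ s ∧ hammingDist y b ≤ t := by
  classical
  set D : Finset ι := {i | a i ≠ b i}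
  obtain ⟨S, hSD, hS⟩ := Finset.exists_subset_card_eq (min_le_right s D.card)
  refine ⟨S.piecewise b a, ?_, ?_⟩
  · have hdiff : ({i | S.piecewise b a i ≠ a i} : Finset ι) = S := by
      ext i
      by_cases hi : i ∈ S
      · simpa [hi, eq_comm, D] using hSD hi
      · simp [hi]
    rw [hammingDist, hdiff, hS]
    exact min_le_left _ _
  · have hdiff : ({i | S.piecewise b a i ≠ b i} : Finset ι) = D \ S := by
      ext i
      by_cases hi : i ∈ S <;> simp [hi, D]
    rw [hammingDist, hdiff, Finset.card_sdiff_of_subset hSD, hS]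
    have hD : D.card = hammingDist a b := rfl
    omega

variable {κ : Type*} {t : ℕ}

theorem pairwise_hammingDist_gt_of_decoder (x : κ → ∀ i, β i) (f : (∀ i, β i) → κ)
    (hf : ∀ k y, hammingDist y (x k) ≤ t → f y = k) :
    Pairwise fun k k' => 2 * t + 1 ≤ hammingDist (x k) (x k') := by
  intro k k' hne
  by_contra! hlt
  obtain ⟨y, hyk, hyk'⟩ :=
    exists_hammingDist_le_of_hammingDist_le_add (s := t) (t := t) (x k) (x k') (by omega)
  exact hne ((hf k y hyk).symm.trans (hf k' y hyk'))

theorem exists_decoder_of_pairwise_hammingDist_gt [Nonempty κ] (x : κ → ∀ i, β i)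
    (hx : Pairwise fun k k' => 2 * t + 1 ≤ hammingDist (x k) (x k')) :
    ∃ f : (∀ i, β i) → κ, ∀ k y, hammingDist y (x k) ≤ t → f y = k := by
  classical
  refine ⟨fun y => if h : ∃ k, hammingDist y (x k) ≤ t then h.choose else Classical.arbitrary κ,
    fun k y hy => ?_⟩
  have h : ∃ k, hammingDist y (x k) ≤ t := ⟨k, hy⟩
  dsimp only
  rw [dif_pos h]
  have hnear := h.choose_spec
  by_contra hne
  have hfar := hx hne
  have htri := hammingDist_triangle_left (x h.choose) (x k) y
  omega

end Hamming

theorem consistentAfterErrors_iff {q M n t : ℕ} (hM : 0 < M) :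
    ConsistentAfterErrors q M n t ↔
      ∃ C : Finset (Fin n → Fin q), IsCode q n (2 * t + 1) C ∧ M ≤ C.card := by
  constructor
  · rintro ⟨x, f, hf⟩
    have hx := pairwise_hammingDist_gt_of_decoder x f hf
    have hinj : Function.Injective x := fun k k' hxk => by
      by_contra hne
      simpa [hxk] using hx hne
    refine ⟨Finset.univ.image x, ?_, by simp [Finset.card_image_of_injective _ hinj]⟩
    simp only [IsCode, Finset.mem_image, Finset.mem_univ, true_and]
    rintro _ ⟨k, rfl⟩ _ ⟨k', rfl⟩ hne
    exact hx (ne_of_apply_ne x hne)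
  · rintro ⟨C, hC, hcard⟩
    have : Nonempty (Fin M) := ⟨⟨0, hM⟩⟩
    obtain ⟨e⟩ : Nonempty (Fin M ↪ C) :=
      Function.Embedding.nonempty_of_card_le (by simpa using hcard)
    refine ⟨fun k => e k, exists_decoder_of_pairwise_hammingDist_gt _ fun k k' hne => ?_⟩
    exact hC _ (e k).2 _ (e k').2 fun h => hne (e.injective (Subtype.ext h))

theorem stmt11_general (q M t : ℕ) (hM : 0 < M) :
    sInf {n : ℕ | ConsistentAfterErrors q M n t} = nq q M (2 * t + 1) := by
  simp only [nq, consistentAfterErrors_iff hM]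

/-- the minimum number of commuting `q`-observables consistent
with an `M`-outcome projective POVM after any `t` outcome errors equals
`n_q(M, 2t+1)`. -/
theorem stmt11 (q M t : ℕ) (hq : 2 ≤ q) (hM : 0 < M) :
    sInf {n : ℕ | ConsistentAfterErrors q M n t} = nq q M (2 * t + 1) :=
  stmt11_general q M t hM
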